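/- Assume every capacity c'_k is an integer power of 2 with c'_k ≥ 1, and for i ≥ 0 let J^(i) be the set of jobs whose bottleneck capacity with respect to (c'_k) equals 2^i. Suppose that for each i we are given a Round-SAP packing Γ^(i) of J^(i) into k_i rounds, where in Γ^(0) every edge has capacity 1 and in Γ^(i) for i ≥ 1 every edge has capacity 2^{i−1}. Then J = ∪_i J^(i) admits a Round-SAP packing into max_i k_i rounds under the capacities (c'_k). -/

import Mathlib

open scoped Classical

namespace PathSAP

variable {ι : Type*}

/-- Job `i` uses the edge `e_{k+1}` (for `k : Fin m`, edges being 1-indexed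
`e_1, …, e_m`) iff `s_i < k + 1 ≤ t_i`, i.e. iff `s_i ≤ k < t_i`. -/
def uses (s t : ι → ℕ) {m : ℕ} (i : ι) (k : Fin m) : Prop :=
  s i ≤ (k : ℕ) ∧ (k : ℕ) < t i

/-- The open rectangle `(s_i, t_i) × (h_i, h_i + d_i)` of job `i` drawn at height `h i`. -/
def rect (s t : ι → ℕ) (d h : ι → ℝ) (i : ι) : Set (ℝ × ℝ) :=
  Set.Ioo (s i : ℝ) (t i : ℝ) ×ˢ Set.Ioo (h i) (h i + d i)

/-- The bottleneck capacity of job `i` (the minimum capacity among the edges it uses)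
equals `v`: every edge used by `i` has capacity at least `v`, and some edge used by `i`
has capacity exactly `v`. -/
def BottleneckEq (s t : ι → ℕ) {m : ℕ} (c : Fin m → ℝ) (i : ι) (v : ℝ) : Prop :=
  (∀ k : Fin m, uses s t i k → v ≤ c k) ∧ (∃ k : Fin m, uses s t i k ∧ c k = v)

/-- The jobs satisfying `P` admit a Round-SAP packing into `K` rounds under the edge
capacities `c`: there are a round assignment and nonnegative heights such that each job
(satisfying `P`) fits below the capacity of each edge it uses, and rectangles of
distinct jobs (satisfying `P`) placed in the same round are disjoint. -/
def SAPPackingOn (s t : ι → ℕ) (d : ι → ℝ) (P : ι → Prop) (K : ℕ) {m : ℕ}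
    (c : Fin m → ℝ) : Prop :=
  ∃ (f : ι → Fin K) (h : ι → ℝ),
    (∀ i, P i → 0 ≤ h i) ∧
    (∀ i, P i → ∀ k : Fin m, uses s t i k → h i + d i ≤ c k) ∧
    (∀ i j, P i → P j → i ≠ j → f i = f j →
      Disjoint (rect s t d h i) (rect s t d h j))


/-- `(f, h)` is a Round-SAP packing of all the jobs into `K` rounds under the edge
capacities `c`. -/
def IsSAPPacking (s t : ι → ℕ) (d : ι → ℝ) {m : ℕ} (c : Fin m → ℝ)
    {K : ℕ} (f : ι → Fin K) (h : ι → ℝ) : Prop :=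
  (∀ i, 0 ≤ h i) ∧
  (∀ i (k : Fin m), uses s t i k → h i + d i ≤ c k) ∧
  (∀ i j, i ≠ j → f i = f j → Disjoint (rect s t d h i) (rect s t d h j))

end PathSAP

/-!
Give each job the level `l` with bottleneck capacity `2 ^ l` and stack the given packings
in one common set of rounds: level `l` is lifted by `2 ^ (l - 1)` (level `0` stays in place),
so it occupies heights in `[2 ^ (l - 1), 2 ^ l]`, inside `[0, 1]` for `l = 0`. Bands of
different levels are stacked without overlap, and every job stays below `2 ^ l`, the
capacity of its bottleneck edge and hence of every edge it uses.
-/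

namespace PathSAP

variable {ι : Type*} {m : ℕ}

section Rect

variable {s t : ι → ℕ} {d : ι → ℝ}

theorem rect_eq_preimage_of_eq_add {h h' : ι → ℝ} {a : ℝ} {i : ι} (hi : h' i = h i + a) :
    rect s t d h' i = (fun p : ℝ × ℝ => (p.1, p.2 - a)) ⁻¹' rect s t d h i := by
  ext p
  simp only [rect, hi, Set.mem_prod, Set.mem_Ioo, Set.mem_preimage]
  constructor <;> rintro ⟨hx, hy₁, hy₂⟩ <;> exact ⟨hx, by linarith, by linarith⟩

theorem disjoint_rect_of_eq_add {h h' : ι → ℝ} (a : ℝ) {i j : ι}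
    (hi : h' i = h i + a) (hj : h' j = h j + a)
    (hij : Disjoint (rect s t d h i) (rect s t d h j)) :
    Disjoint (rect s t d h' i) (rect s t d h' j) := by
  rw [rect_eq_preimage_of_eq_add hi, rect_eq_preimage_of_eq_add hj]
  exact hij.preimage _

theorem disjoint_rect_of_add_le {h : ι → ℝ} {i j : ι} (hij : h i + d i ≤ h j) :
    Disjoint (rect s t d h i) (rect s t d h j) := by
  refine Set.disjoint_left.2 fun p hpi hpj => ?_
  simp only [rect, Set.mem_prod, Set.mem_Ioo] at hpi hpj
  linarith [hpi.2.2, hpj.2.1]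

end Rect

theorem uses_start {s t : ι → ℕ} {i : ι} (hst : s i < t i) (htm : t i ≤ m) :
    uses s t i (⟨s i, hst.trans_le htm⟩ : Fin m) :=
  ⟨le_rfl, hst⟩

theorem exists_bottleneckEq {s t : ι → ℕ} (c : Fin m → ℝ) {i : ι}
    (hi : ∃ k : Fin m, uses s t i k) : ∃ k : Fin m, BottleneckEq s t c i (c k) := by
  obtain ⟨k, hk, hmin⟩ := Finset.exists_min_image {k | uses s t i k} c
    (by simpa [Finset.Nonempty] using hi)
  exact ⟨k, fun k' hk' => hmin k' (by simpa using hk'), k, by simpa using hk, rfl⟩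

namespace SAPPackingOn

variable {s t : ι → ℕ} {d : ι → ℝ} {P Q : ι → Prop} {K : ℕ} {c : Fin m → ℝ}

theorem mono (hPQ : ∀ i, Q i → P i) (hP : SAPPackingOn s t d P K c) :
    SAPPackingOn s t d Q K c := by
  obtain ⟨f, h, hnn, hcap, hdisj⟩ := hP
  exact ⟨f, h, fun i hi => hnn i (hPQ i hi), fun i hi => hcap i (hPQ i hi),
    fun i j hi hj => hdisj i j (hPQ i hi) (hPQ j hj)⟩

theorem castRounds {K' : ℕ} (hKK' : K ≤ K') (hP : SAPPackingOn s t d P K c) :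
    SAPPackingOn s t d P K' c := by
  obtain ⟨f, h, hnn, hcap, hdisj⟩ := hP
  exact ⟨Fin.castLE hKK' ∘ f, h, hnn, hcap,
    fun i j hi hj hij hf => hdisj i j hi hj hij (Fin.castLE_injective hKK' hf)⟩

end SAPPackingOn

theorem sapPackingOn_of_levels {s t : ι → ℕ} {d : ι → ℝ} {K : ℕ} {c : Fin m → ℝ}
    (lv : ι → ℕ) (base cap : ℕ → ℝ) (hbase : ∀ l, 0 ≤ base l)
    (hsep : ∀ l l', l < l' → base l + cap l ≤ base l')
    (hedge : ∀ i, ∃ k : Fin m, uses s t i k)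
    (hcap : ∀ i k, uses s t i k → base (lv i) + cap (lv i) ≤ c k)
    (hpack : ∀ l, SAPPackingOn s t d (fun i => lv i = l) K (fun _ : Fin m => cap l)) :
    SAPPackingOn s t d (fun _ => True) K c := by
  choose F H hHnn hHcap hHdisj using hpack
  have top_le i : H (lv i) i + d i ≤ cap (lv i) := by
    obtain ⟨k, hk⟩ := hedge i
    exact hHcap _ i rfl k hk
  have below {i j} (hij : lv i < lv j) :
      base (lv i) + H (lv i) i + d i ≤ base (lv j) + H (lv j) j := by
    linarith [top_le i, hsep _ _ hij, hHnn _ j rfl]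
  refine ⟨fun i => F (lv i) i, fun i => base (lv i) + H (lv i) i,
    fun i _ => add_nonneg (hbase _) (hHnn _ i rfl),
    fun i _ k hk => by linarith [top_le i, hcap i k hk], fun i j _ _ hij hf => ?_⟩
  rcases lt_trichotomy (lv i) (lv j) with hlt | heq | hgt
  · exact disjoint_rect_of_add_le (by simpa only [add_assoc] using below hlt)
  · refine disjoint_rect_of_eq_add (h := H (lv i)) (base (lv i)) (add_comm _ _)
      (by rw [heq, add_comm]) (hHdisj _ i j rfl heq.symm hij ?_)
    simpa only [heq] using hf
  · exact (disjoint_rect_of_add_le (by simpa only [add_assoc] using below hgt)).symm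

def levelBase : ℕ → ℝ
  | 0 => 0
  | l + 1 => 2 ^ l

theorem levelBase_nonneg (l : ℕ) : 0 ≤ levelBase l := by
  cases l <;> simp [levelBase]

/-- For `l = 0` the truncated subtraction gives `2 ^ (0 - 1) = 1`. -/
theorem levelBase_add_pow_pred (l : ℕ) : levelBase l + 2 ^ (l - 1) = (2 : ℝ) ^ l := by
  cases l <;> simp [levelBase, pow_succ, mul_two]

theorem pow_le_levelBase {l l' : ℕ} (hll' : l < l') : (2 : ℝ) ^ l ≤ levelBase l' := by
  obtain ⟨n, rfl⟩ := Nat.exists_eq_add_of_lt hll'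
  exact pow_le_pow_right₀ one_le_two (by omega)

end PathSAP

open PathSAP in
theorem sap_combine_bottleneck_levels_general {ι : Type*} {m : ℕ}
    (c' : Fin m → ℝ) (hpow : ∀ k, ∃ e : ℕ, c' k = 2 ^ e)
    (s t : ι → ℕ) (d : ι → ℝ)
    (hst : ∀ i, s i < t i) (htm : ∀ i, t i ≤ m)
    (kk : ℕ → ℕ) (K : ℕ) (hK : ∀ lvl : ℕ, kk lvl ≤ K)
    (hpack0 : SAPPackingOn s t d (fun i => BottleneckEq s t c' i 1) (kk 0)
      (fun _ : Fin m => (1 : ℝ)))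
    (hpacki : ∀ lvl : ℕ, 1 ≤ lvl →
      SAPPackingOn s t d (fun i => BottleneckEq s t c' i (2 ^ lvl)) (kk lvl)
        (fun _ : Fin m => (2 : ℝ) ^ (lvl - 1))) :
    SAPPackingOn s t d (fun _ => True) K c' := by
  have hedge i : ∃ k : Fin m, uses s t i k := ⟨_, uses_start (hst i) (htm i)⟩
  have hlevel i : ∃ l : ℕ, BottleneckEq s t c' i (2 ^ l) := by
    obtain ⟨k, hk⟩ := exists_bottleneckEq c' (hedge i)
    obtain ⟨l, hl⟩ := hpow k
    exact ⟨l, hl ▸ hk⟩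
  choose lv hlv using hlevel
  have hpack l : SAPPackingOn s t d (fun i => BottleneckEq s t c' i (2 ^ l)) (kk l)
      (fun _ : Fin m => (2 : ℝ) ^ (l - 1)) := by
    rcases Nat.eq_zero_or_pos l with rfl | hl
    · simpa using hpack0
    · exact hpacki l hl
  refine sapPackingOn_of_levels lv levelBase (fun l => 2 ^ (l - 1)) levelBase_nonneg
    (fun l l' hll' => (levelBase_add_pow_pred l).trans_le (pow_le_levelBase hll')) hedge
    (fun i k hk => (levelBase_add_pow_pred _).trans_le ((hlv i).1 k hk)) fun l => ?_
  exact ((hpack l).castRounds (hK l)).mono fun i hi => hi ▸ hlv i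

open PathSAP in
/-- Assume every capacity `c'_k` is an integer power of 2 with
`c'_k ≥ 1`, and for `i ≥ 0` let `J^(i)` be the set of jobs whose bottleneck capacity
w.r.t. `(c'_k)` equals `2^i`. Suppose that for each `i` we are given a Round-SAP packing
`Γ^(i)` of `J^(i)` into `k_i` rounds, where in `Γ^(0)` every edge has capacity 1 and in
`Γ^(i)` for `i ≥ 1` every edge has capacity `2^{i−1}`. Then `J = ∪_i J^(i)` admits a
Round-SAP packing into `max_i k_i` rounds under the capacities `(c'_k)` (stated here
for any `K` with `k_i ≤ K` for all `i`). -/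
theorem sap_combine_bottleneck_levels {ι : Type*} [Fintype ι] {m : ℕ}
    (c' : Fin m → ℝ) (hpow : ∀ k, ∃ e : ℕ, c' k = 2 ^ e)
    (s t : ι → ℕ) (d : ι → ℝ)
    (hst : ∀ i, s i < t i) (htm : ∀ i, t i ≤ m) (hd0 : ∀ i, 0 < d i)
    (kk : ℕ → ℕ) (K : ℕ) (hK : ∀ lvl : ℕ, kk lvl ≤ K)
    (hpack0 : SAPPackingOn s t d (fun i => BottleneckEq s t c' i 1) (kk 0)
      (fun _ : Fin m => (1 : ℝ)))
    (hpacki : ∀ lvl : ℕ, 1 ≤ lvl →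
      SAPPackingOn s t d (fun i => BottleneckEq s t c' i (2 ^ lvl)) (kk lvl)
        (fun _ : Fin m => (2 : ℝ) ^ (lvl - 1))) :
    SAPPackingOn s t d (fun _ => True) K c' :=
  sap_combine_bottleneck_levels_general c' hpow s t d hst htm kk K hK hpack0 hpacki
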